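/- The pair (a,b) = (−1,1) satisfies the five equations (E1)–(E5), and the determinant of the 4×4 matrix [[2,−1,1,−1],[−1,2,−1,1],[1,−1,2,−1],[−1,1,−1,2]] is nonzero (it equals 5). (Hence (−1,1) is a point of F₂(T₄,₅) that violates the rectangle relation, i.e. a ghost character of the (4,5)-torus knot.) -/

import Mathlib

/-! The matrix is `1 + v vᵀ` for `v = (1, -1, 1, -1)`, so by the matrix determinant lemma
its determinant is `1 + ‖v‖² = 5`. -/

/-- The five defining equations (E1)–(E5) of the fundamental algebraic set
`F₂(T₄,₅)` in the coordinates `(a, b) = (x₁₂, x₁₃)`. -/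
def F2Eqns (a b : ℂ) : Prop :=
  a ^ 5 - 4 * a ^ 3 * b + 3 * a ^ 3 + 3 * a * b ^ 2 - 2 * a * b - 3 * a = 2 ∧
  a ^ 6 - 4 * a ^ 4 * b + 2 * a ^ 4 + 3 * a ^ 2 * b ^ 2 + a ^ 2 * b - 5 * a ^ 2
    - b ^ 2 + 2 = a ∧
  a ^ 4 * b - a ^ 4 - 3 * a ^ 2 * b ^ 2 + 4 * a ^ 2 * b + b ^ 3 - 3 * b = a ∧
  a ^ 5 * b - a ^ 5 - 4 * a ^ 3 * b ^ 2 + 6 * a ^ 3 * b + 3 * a * b ^ 3 - a ^ 3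
    - 3 * a * b ^ 2 - 5 * a * b + 3 * a = b ∧
  a ^ 5 - 3 * a ^ 3 * b + a ^ 3 + a * b ^ 2 + 2 * a * b - 3 * a = b

open Matrix

theorem F2Eqns_neg_one_one : F2Eqns (-1) 1 := by
  unfold F2Eqns
  norm_num

theorem rectangleMatrix_eq_one_add_vecMulVec :
    !![(2 : ℂ), -1, 1, -1; -1, 2, -1, 1; 1, -1, 2, -1; -1, 1, -1, 2] =
      1 + vecMulVec ![1, -1, 1, -1] ![1, -1, 1, -1] := by
  ext i j
  fin_cases i <;> fin_cases j <;> norm_num [one_apply, vecMulVec_apply]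

theorem det_rectangleMatrix :
    det !![(2 : ℂ), -1, 1, -1; -1, 2, -1, 1; 1, -1, 2, -1; -1, 1, -1, 2] = 5 := by
  rw [rectangleMatrix_eq_one_add_vecMulVec, vecMulVec_eq (Fin 1),
    det_one_add_replicateCol_mul_replicateRow]
  simp only [dotProduct, Fin.sum_univ_four, cons_val_zero, cons_val_one, cons_val]
  norm_num

theorem stmt2 :
    F2Eqns (-1) 1 ∧
    Matrix.det !![(2 : ℂ), -1, 1, -1; -1, 2, -1, 1; 1, -1, 2, -1; -1, 1, -1, 2] = 5 ∧
    Matrix.det !![(2 : ℂ), -1, 1, -1; -1, 2, -1, 1; 1, -1, 2, -1; -1, 1, -1, 2] ≠ 0 :=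
  ⟨F2Eqns_neg_one_one, det_rectangleMatrix, by rw [det_rectangleMatrix]; norm_num⟩
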